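/- arXiv:math/9807106 — 4 statements merged into one kernel-verified Lean document; each statement's English description precedes it below -/
import Mathlib

section
/- The Kostant partition function of sl(n) satisfies K_{nβ+r} = Σ_{ν ∈ Q^+} ⁽ⁿ⁾K_{nν+r} · K_{β−ν} for all β ∈ Q^+ and r ∈ Q^+/nQ^+, where ⁽ⁿ⁾K_μ is defined by Π_{α>0} Σ_{k=0}^{n-1} e^{kα} = Σ_{μ∈Q^+} ⁽ⁿ⁾K_μ e^μ. -/
open scoped BigOperators

namespace SLnKostant

/-- The positive roots of `sl(n)`, indexed by pairs `i < j` (the root `e_i − e_j`). -/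
def PRoots (n : ℕ) := {q : Fin n × Fin n // q.1 < q.2}

instance (n : ℕ) : Fintype (PRoots n) := by unfold PRoots; infer_instance

/-- The root vector `e_i − e_j ∈ ℤ^n` of a positive root. -/
def rootv {n : ℕ} (q : PRoots n) : Fin n → ℤ :=
  Pi.single q.1.1 1 - Pi.single q.1.2 1

/-- The `i`-th simple root `α_i = e_i − e_{i+1}` as a positive root. -/
def sroot {N : ℕ} (i : Fin N) : PRoots (N + 1) :=
  ⟨(i.castSucc, i.succ), Fin.castSucc_lt_succ⟩

/-- The Kostant partition function `K_β` of `sl(N+1)`: the number of ways of writing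
`β` as a nonnegative integral combination of positive roots. -/
noncomputable def K (N : ℕ) (β : Fin (N + 1) → ℤ) : ℕ :=
  Nat.card {f : PRoots (N + 1) → ℕ // ∑ q : PRoots (N + 1), (f q : ℤ) • rootv q = β}

/-- The truncated partition function `⁽ⁿ⁾K_μ` (`n = N+1`), defined by
`Π_{α>0} (Σ_{k=0}^{n-1} e^{kα}) = Σ_μ ⁽ⁿ⁾K_μ e^μ`: the number of ways of writing `μ`
as a combination of positive roots with coefficients in `{0,…,n−1}`. -/
noncomputable def Kn (N : ℕ) (μ : Fin (N + 1) → ℤ) : ℕ :=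
  Nat.card {f : PRoots (N + 1) → ℕ //
    (∀ q, f q ≤ N) ∧ ∑ q : PRoots (N + 1), (f q : ℤ) • rootv q = μ}

/-! Write each coefficient of an expansion `Σ f_α α = nβ + r` in positive roots as
`f_α = n g_α + s_α` with `0 ≤ s_α < n`. With `ν := β − Σ g_α α`, the digits `s` give an
expansion of `nν + r` with coefficients below `n` and the quotients `g` an expansion of `β − ν`,
and this is a bijection. The sum over `ν` is finite because `x ↦ −Σ i·xᵢ` is positive on
every positive root, so each `K_μ` counts a finite set. -/

theorem _root_.Nat.card_sigma_eq_finsum {α : Type*} {β : α → Type*} [Finite (Σ a, β a)] :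
    Nat.card (Σ a, β a) = ∑ᶠ a, Nat.card (β a) := by
  classical
  have hfst : (Set.range (Sigma.fst : (Σ a, β a) → α)).Finite := Set.finite_range _
  have : ∀ a, Finite (β a) := fun a => Finite.of_injective (Sigma.mk a) sigma_mk_injective
  have hsupp : Function.support (fun a => Nat.card (β a)) ⊆ hfst.toFinset := by
    intro a ha
    obtain ⟨⟨b⟩, -⟩ := Nat.card_ne_zero.mp ha
    exact hfst.mem_toFinset.mpr ⟨⟨a, b⟩, rfl⟩
  rw [finsum_eq_finsetSum_of_support_subset _ hsupp, ← Finset.sum_coe_sort, ← Nat.card_sigma]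
  exact (Nat.card_congr (Equiv.sigmaSubtypeEquivOfSubset β (· ∈ hfst.toFinset)
    fun a b => hfst.mem_toFinset.mpr ⟨⟨a, b⟩, rfl⟩)).symm

section Expansion

variable {ι M : Type*} [Fintype ι] [AddCommGroup M]

abbrev Expansion (v : ι → M) (μ : M) : Type _ :=
  {f : ι → ℕ // ∑ i, (f i : ℤ) • v i = μ}

abbrev DigitExpansion (v : ι → M) (n : ℕ) (μ : M) : Type _ :=
  {f : ι → ℕ // (∀ i, f i < n) ∧ ∑ i, (f i : ℤ) • v i = μ}

theorem sum_natCast_mul_add_zsmul (v : ι → M) (n : ℕ) (g s : ι → ℕ) :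
    ∑ i, ((n * g i + s i : ℕ) : ℤ) • v i =
      (n : ℤ) • ∑ i, (g i : ℤ) • v i + ∑ i, (s i : ℤ) • v i := by
  simp only [Finset.smul_sum, ← Finset.sum_add_distrib, smul_smul, ← add_smul]
  push_cast
  rfl

def expansionFiberEquiv (v : ι → M) {n : ℕ} (hn : 0 < n) (β r ν : M) :
    {f : Expansion v ((n : ℤ) • β + r) // β - ∑ i, ((f.1 i / n : ℕ) : ℤ) • v i = ν} ≃
      DigitExpansion v n ((n : ℤ) • ν + r) × Expansion v (β - ν) where
  toFun := fun ⟨⟨f, hf⟩, hν⟩ =>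
    (⟨fun i => f i % n, fun i => Nat.mod_lt _ hn, by
      have h := sum_natCast_mul_add_zsmul v n (fun i => f i / n) (fun i => f i % n)
      simp only [Nat.div_add_mod, hf] at h
      rw [← hν]
      dsimp only
      rw [smul_sub, sub_add_eq_add_sub, h]
      abel⟩,
    ⟨fun i => f i / n, by rw [← hν, sub_sub_cancel]⟩)
  invFun := fun ⟨⟨s, hs, hsum⟩, ⟨g, hg⟩⟩ =>
    ⟨⟨fun i => n * g i + s i, by
      rw [sum_natCast_mul_add_zsmul, hg, hsum, smul_sub]
      abel⟩,
    by simp only [Nat.mul_add_div hn, Nat.div_eq_of_lt (hs _), add_zero, hg, sub_sub_cancel]⟩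
  left_inv f := Subtype.ext <| Subtype.ext <| funext fun i => Nat.div_add_mod _ _
  right_inv := by
    rintro ⟨⟨s, hs, -⟩, ⟨g, -⟩⟩
    refine Prod.ext (Subtype.ext <| funext fun i => ?_) (Subtype.ext <| funext fun i => ?_)
    · exact (Nat.mul_add_mod _ _ _).trans (Nat.mod_eq_of_lt (hs i))
    · simp [Nat.mul_add_div hn, Nat.div_eq_of_lt (hs i)]

theorem card_expansion_smul_add (v : ι → M) {n : ℕ} (hn : 0 < n) (β r : M)
    [Finite (Expansion v ((n : ℤ) • β + r))] :
    Nat.card (Expansion v ((n : ℤ) • β + r)) =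
      ∑ᶠ ν, Nat.card (DigitExpansion v n ((n : ℤ) • ν + r)) * Nat.card (Expansion v (β - ν)) := by
  let e := (Equiv.sigmaFiberEquiv fun f : Expansion v ((n : ℤ) • β + r) =>
      β - ∑ i, ((f.1 i / n : ℕ) : ℤ) • v i).symm.trans
    (Equiv.sigmaCongrRight (expansionFiberEquiv v hn β r))
  have : Finite (Σ ν : M, DigitExpansion v n ((n : ℤ) • ν + r) × Expansion v (β - ν)) :=
    Finite.of_equiv _ e
  simp only [Nat.card_congr e, Nat.card_sigma_eq_finsum, Nat.card_prod]

theorem finite_expansion_of_pos (v : ι → M) (w : M →+ ℤ) (hw : ∀ i, 0 < w (v i)) (μ : M) :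
    Finite (Expansion v μ) := by
  classical
  refine Set.Finite.to_subtype ((Set.finite_Iic fun _ => (w μ).toNat).subset fun f hf i => ?_)
  have hsum : ∑ j, (f j : ℤ) * w (v j) = w μ := by
    rw [← hf, map_sum]
    simp only [map_zsmul, smul_eq_mul]
  have hle : (f i : ℤ) * w (v i) ≤ w μ :=
    hsum ▸ Finset.single_le_sum (fun j _ => mul_nonneg (Int.natCast_nonneg _) (hw j).le)
      (Finset.mem_univ i)
  have : (f i : ℤ) ≤ w μ := (le_mul_of_one_le_right (Int.natCast_nonneg _) (hw i)).trans hle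
  show f i ≤ (w μ).toNat
  omega

end Expansion

def rootWeight (n : ℕ) : (Fin n → ℤ) →+ ℤ :=
  AddMonoidHom.mk' (fun x => ∑ i : Fin n, -((i : ℕ) : ℤ) * x i) fun x y => by
    simp only [Pi.add_apply, mul_add, Finset.sum_add_distrib]

theorem rootWeight_rootv_pos {n : ℕ} (q : PRoots n) : 0 < rootWeight n (rootv q) := by
  have hq : (q.1.1 : ℕ) < q.1.2 := q.2
  simp only [rootWeight, AddMonoidHom.mk'_apply, rootv, Pi.sub_apply, mul_sub,
    Finset.sum_sub_distrib, Pi.single_apply, mul_ite, mul_one, mul_zero, Finset.sum_ite_eq',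
    Finset.mem_univ, if_true]
  omega

instance {N : ℕ} (μ : Fin (N + 1) → ℤ) : Finite (Expansion (rootv (n := N + 1)) μ) :=
  finite_expansion_of_pos _ _ rootWeight_rootv_pos μ

theorem K_eq_card_expansion (N : ℕ) (μ : Fin (N + 1) → ℤ) :
    K N μ = Nat.card (Expansion rootv μ) :=
  rfl

theorem Kn_eq_card_digitExpansion (N : ℕ) (μ : Fin (N + 1) → ℤ) :
    Kn N μ = Nat.card (DigitExpansion rootv (N + 1) μ) :=
  Nat.card_congr <| Equiv.subtypeEquivRight fun _ => by simp only [Nat.lt_succ_iff]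

theorem statement8_general (N : ℕ) (k : Fin N → ℕ)
    (β : Fin (N + 1) → ℤ) :
    K N ((N + 1 : ℤ) • β + ∑ i, (k i : ℤ) • rootv (sroot i)) =
      ∑ᶠ ν : Fin (N + 1) → ℤ,
        Kn N ((N + 1 : ℤ) • ν + ∑ i, (k i : ℤ) • rootv (sroot i)) * K N (β - ν) := by
  have h := card_expansion_smul_add rootv (Nat.succ_pos N) β (∑ i, (k i : ℤ) • rootv (sroot i))
  push_cast at h
  simpa only [K_eq_card_expansion, Kn_eq_card_digitExpansion] using h

/-- the Kostant partition function of `sl(n)` (`n = N+1`) satisfies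
`K_{nβ+r} = Σ_{ν ∈ Q⁺} ⁽ⁿ⁾K_{nν+r} · K_{β−ν}` for all `β ∈ Q⁺` and all
representatives `r = Σ k_i α_i`, `0 ≤ k_i ≤ n−1`, of `Q⁺/nQ⁺`. -/
theorem statement8 (N : ℕ) (k : Fin N → ℕ) (hk : ∀ i, k i ≤ N)
    (β : Fin (N + 1) → ℤ) (hβ : ∃ g : Fin N → ℕ, β = ∑ i, (g i : ℤ) • rootv (sroot i)) :
    K N ((N + 1 : ℤ) • β + ∑ i, (k i : ℤ) • rootv (sroot i)) =
      ∑ᶠ ν : Fin (N + 1) → ℤ,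
        Kn N ((N + 1 : ℤ) • ν + ∑ i, (k i : ℤ) • rootv (sroot i)) * K N (β - ν) :=
  statement8_general N k β

end SLnKostant
end

section
/- Let κ = 3/p with p ≥ 2, gcd(p,3)=1, and μ ∈ P a weight of sl(3) with ⟨μ+ρ̄, α⟩ ∈ pZ for some positive root α. Set R(μ) = e^{-2πi⟨θ,μ+ρ̄⟩/(3p)} + e^{2πi⟨α_1,μ+ρ̄⟩/(3p)} + e^{2πi⟨α_2,μ+ρ̄⟩/(3p)}. Then R(μ) = −ε e^{-2πiε/3} |R(μ)| for a sign ε ∈ {±1} determined by which hyperplane H_α^{(p)} the weight μ lies on (ε = +1 for α = θ, ε = −1 for α = α_1 or α_2), and consequently R(μ) + R̄(μ) − ε|R(μ)| = 0. -/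
/-!
With `x = 2π⟨α₁, μ+ρ̄⟩/(3p)` and `y = 2π⟨α₂, μ+ρ̄⟩/(3p)` in `[0, 2π/3]`, one has
`R(μ) = e^{-i(x+y)} + e^{ix} + e^{iy}`. On `H_θ` we have `x + y = 2π/3`, and factoring out `e^{iπ/3}`
leaves the real number `2 cos((x-y)/2) - 1 ≥ 0`; on `H_{α₁}` we have `x = 2π/3`, and factoring out
`e^{2πi/3}` leaves `1 - 2 cos(y + π/3) ≥ 0` (`H_{α₂}` is symmetric). Hence `R(μ) = e^{iφ} |R(μ)|`
with `e^{iφ} = -ε e^{-2πiε/3}` and `2 cos φ = ε`, so `R(μ) + R̄(μ) = 2 cos φ |R(μ)| = ε |R(μ)|`.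
-/

open Complex Real

/-- `R(μ) = e^{-2πi⟨θ,μ+ρ̄⟩/(3p)} + e^{2πi⟨α_1,μ+ρ̄⟩/(3p)} + e^{2πi⟨α_2,μ+ρ̄⟩/(3p)}`,
written in terms of the pairings `a_i = ⟨α_i, μ+ρ̄⟩` (so `⟨θ, μ+ρ̄⟩ = a_1 + a_2`). -/
noncomputable def Rval (p : ℕ) (a1 a2 : ℤ) : ℂ :=
  Complex.exp (-(2 * (π : ℂ) * I * ((a1 : ℂ) + (a2 : ℂ))) / (3 * (p : ℂ))) +
    Complex.exp (2 * (π : ℂ) * I * (a1 : ℂ) / (3 * (p : ℂ))) +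
    Complex.exp (2 * (π : ℂ) * I * (a2 : ℂ) / (3 * (p : ℂ)))

noncomputable def threeExpSum (x y : ℝ) : ℂ :=
  exp (-(x + y) * I) + exp (x * I) + exp (y * I)

theorem Rval_eq_threeExpSum (p : ℕ) (a1 a2 : ℤ) :
    Rval p a1 a2 = threeExpSum (2 * π * a1 / (3 * p)) (2 * π * a2 / (3 * p)) := by
  unfold Rval threeExpSum
  push_cast
  ring_nf

theorem threeExpSum_comm (x y : ℝ) : threeExpSum x y = threeExpSum y x := by
  unfold threeExpSum
  rw [add_comm (y : ℂ)]
  ring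

theorem exp_pi_div_three_mul_I_pow_three : exp (↑(π / 3) * I) ^ 3 = -1 := by
  rw [← Complex.exp_nat_mul, ← exp_pi_mul_I]
  push_cast
  ring_nf

theorem threeExpSum_of_add_eq {x y : ℝ} (h : x + y = 2 * π / 3) :
    threeExpSum x y = exp (↑(π / 3) * I) * ↑(2 * Real.cos ((x - y) / 2) - 1) := by
  obtain ⟨d, rfl, rfl⟩ : ∃ d, x = π / 3 + d ∧ y = π / 3 - d :=
    ⟨(x - y) / 2, by linarith, by linarith⟩
  set u := exp (↑(π / 3) * I)
  set w := exp (↑d * I)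
  have h_neg_sum : exp (-(↑(π / 3 + d) + ↑(π / 3 - d)) * I) = (u ^ 2)⁻¹ := by
    rw [← Complex.exp_nat_mul, ← Complex.exp_neg]; push_cast; ring_nf
  have h_left : exp (↑(π / 3 + d) * I) = u * w := by
    rw [← Complex.exp_add]; push_cast; ring_nf
  have h_right : exp (↑(π / 3 - d) * I) = u * w⁻¹ := by
    rw [← Complex.exp_neg, ← Complex.exp_add]; push_cast; ring_nf
  have h_two_cos : ((2 * Real.cos ((π / 3 + d - (π / 3 - d)) / 2) : ℝ) : ℂ) = w + w⁻¹ := by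
    rw [show (π / 3 + d - (π / 3 - d)) / 2 = d by ring]
    push_cast
    rw [two_cos, neg_mul, Complex.exp_neg]
  have hu : u ^ 3 = -1 := exp_pi_div_three_mul_I_pow_three
  unfold threeExpSum
  rw [h_neg_sum, h_left, h_right, Complex.ofReal_sub, h_two_cos, Complex.ofReal_one]
  have hu0 : u ≠ 0 := Complex.exp_ne_zero _
  have hw0 : w ≠ 0 := Complex.exp_ne_zero _
  field_simp
  linear_combination w * hu

theorem threeExpSum_two_pi_div_three_left (y : ℝ) :
    threeExpSum (2 * π / 3) y = exp (↑(2 * π / 3) * I) * ↑(1 - 2 * Real.cos (y + π / 3)) := by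
  set u := exp (↑(π / 3) * I)
  set v := exp (↑y * I)
  have h_neg_sum : exp (-(↑(2 * π / 3) + ↑y) * I) = (u ^ 2 * v)⁻¹ := by
    rw [← Complex.exp_nat_mul, ← Complex.exp_add, ← Complex.exp_neg]; push_cast; ring_nf
  have h_left : exp (↑(2 * π / 3) * I) = u ^ 2 := by
    rw [← Complex.exp_nat_mul]; push_cast; ring_nf
  have h_two_cos : ((2 * Real.cos (y + π / 3) : ℝ) : ℂ) = v * u + (v * u)⁻¹ := by
    rw [← Complex.exp_add, ← Complex.exp_neg]
    push_cast
    rw [two_cos]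
    ring_nf
  have hu : u ^ 3 = -1 := exp_pi_div_three_mul_I_pow_three
  unfold threeExpSum
  rw [h_neg_sum, h_left, Complex.ofReal_sub, h_two_cos, Complex.ofReal_one]
  have hu0 : u ≠ 0 := Complex.exp_ne_zero _
  have hv0 : v ≠ 0 := Complex.exp_ne_zero _
  field_simp
  linear_combination (u ^ 2 * v ^ 2 + 1) * hu

theorem two_pi_mul_div_three_mul_mem_Icc {a p : ℝ} (hp : 0 < p) (h0 : 0 ≤ a) (h1 : a ≤ p) :
    2 * π * a / (3 * p) ∈ Set.Icc 0 (2 * π / 3) := by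
  refine ⟨by positivity, ?_⟩
  rw [div_le_div_iff₀ (by positivity) (by norm_num)]
  nlinarith [pi_pos]

theorem cos_two_pi_div_three : Real.cos (2 * π / 3) = -(1 / 2) := by
  rw [show 2 * π / 3 = π - π / 3 by ring, Real.cos_pi_sub, cos_pi_div_three]

theorem one_le_two_mul_cos_half_sub {x y : ℝ} (hx : 0 ≤ x) (hy : 0 ≤ y)
    (h : x + y = 2 * π / 3) : 1 ≤ 2 * Real.cos ((x - y) / 2) := by
  have hxy : |(x - y) / 2| ≤ π / 3 := abs_le.2 ⟨by linarith, by linarith⟩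
  have := Real.cos_le_cos_of_nonneg_of_le_pi (abs_nonneg _) (by linarith [pi_pos]) hxy
  rw [Real.cos_abs, cos_pi_div_three] at this
  linarith

theorem two_mul_cos_add_pi_div_three_le_one {y : ℝ} (h0 : 0 ≤ y) (h1 : y ≤ 2 * π / 3) :
    2 * Real.cos (y + π / 3) ≤ 1 := by
  have := Real.cos_le_cos_of_nonneg_of_le_pi (by positivity) (by linarith)
    (by linarith : π / 3 ≤ y + π / 3)
  rw [cos_pi_div_three] at this
  linarith

theorem neg_one_mul_exp_neg_two_pi_div_three :
    -((1 : ℤ) : ℂ) * exp (-(2 * (π : ℂ) * I * ((1 : ℤ) : ℂ)) / 3) = exp (↑(π / 3) * I) := by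
  rw [show (↑(π / 3) : ℂ) * I = π * I + -(2 * π * I * ((1 : ℤ) : ℂ)) / 3 by push_cast; ring,
    Complex.exp_add, exp_pi_mul_I]
  ring

theorem neg_neg_one_mul_exp_two_pi_div_three :
    -((-1 : ℤ) : ℂ) * exp (-(2 * (π : ℂ) * I * ((-1 : ℤ) : ℂ)) / 3) = exp (↑(2 * π / 3) * I) := by
  push_cast
  ring_nf

theorem eq_mul_norm_and_add_conj_sub_eq_zero {z : ℂ} {φ r : ℝ} {ε : ℤ}
    (hφ : 2 * Real.cos φ = ε) (hr : 0 ≤ r) (hz : z = exp (↑φ * I) * ↑r) :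
    z = exp (↑φ * I) * ↑‖z‖ ∧ z + (starRingEnd ℂ) z - ε * ‖z‖ = 0 := by
  have hnorm : ‖z‖ = r := by
    rw [hz, norm_mul, norm_exp_ofReal_mul_I, Complex.norm_of_nonneg hr, one_mul]
  have hre : z.re = Real.cos φ * r := by
    rw [hz, re_mul_ofReal, exp_ofReal_mul_I_re]
  refine ⟨by rw [hnorm, hz], ?_⟩
  rw [add_conj, hre, hnorm, ← Complex.ofReal_intCast, ← hφ]
  push_cast
  ring

theorem statement15_general (p : ℕ)
    (a1 a2 : ℤ) (h1 : 1 ≤ a1) (h1' : a1 ≤ (p : ℤ)) (h2 : 1 ≤ a2) (h2' : a2 ≤ (p : ℤ))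
    (ε : ℤ)
    (hcase : (a1 + a2 = (p : ℤ) ∧ ε = 1) ∨ (a1 = (p : ℤ) ∧ ε = -1) ∨
      (a2 = (p : ℤ) ∧ ε = -1)) :
    Rval p a1 a2 =
        -(ε : ℂ) * Complex.exp (-(2 * (π : ℂ) * I * (ε : ℂ)) / 3) *
          (‖Rval p a1 a2‖ : ℂ) ∧
      Rval p a1 a2 + (starRingEnd ℂ) (Rval p a1 a2) -
          (ε : ℂ) * (‖Rval p a1 a2‖ : ℂ) = 0 := by
  have hp_pos : (0 : ℝ) < p := by exact_mod_cast (by omega : 0 < p)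
  obtain ⟨hx0, hx1⟩ := two_pi_mul_div_three_mul_mem_Icc (a := a1) hp_pos
    (by exact_mod_cast (by omega : (0 : ℤ) ≤ a1)) (by exact_mod_cast h1')
  obtain ⟨hy0, hy1⟩ := two_pi_mul_div_three_mul_mem_Icc (a := a2) hp_pos
    (by exact_mod_cast (by omega : (0 : ℤ) ≤ a2)) (by exact_mod_cast h2')
  rw [Rval_eq_threeExpSum]
  rcases hcase with ⟨hsum, rfl⟩ | ⟨rfl, rfl⟩ | ⟨rfl, rfl⟩
  · have hxy : 2 * π * a1 / (3 * p) + 2 * π * a2 / (3 * p) = 2 * π / 3 := by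
      rw [← add_div, ← mul_add, ← Int.cast_add, hsum]; push_cast; field_simp
    rw [neg_one_mul_exp_neg_two_pi_div_three, threeExpSum_of_add_eq hxy]
    exact eq_mul_norm_and_add_conj_sub_eq_zero (by rw [cos_pi_div_three]; norm_num)
      (by linarith [one_le_two_mul_cos_half_sub hx0 hy0 hxy]) rfl
  · have hx : 2 * π * ((p : ℤ) : ℝ) / (3 * p) = 2 * π / 3 := by push_cast; field_simp
    rw [neg_neg_one_mul_exp_two_pi_div_three, hx, threeExpSum_two_pi_div_three_left]
    exact eq_mul_norm_and_add_conj_sub_eq_zero (by rw [cos_two_pi_div_three]; norm_num)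
      (by linarith [two_mul_cos_add_pi_div_three_le_one hy0 hy1]) rfl
  · have hy : 2 * π * ((p : ℤ) : ℝ) / (3 * p) = 2 * π / 3 := by push_cast; field_simp
    rw [neg_neg_one_mul_exp_two_pi_div_three, hy, threeExpSum_comm,
      threeExpSum_two_pi_div_three_left]
    exact eq_mul_norm_and_add_conj_sub_eq_zero (by rw [cos_two_pi_div_three]; norm_num)
      (by linarith [two_mul_cos_add_pi_div_three_le_one hx0 hx1]) rfl

/-- for `κ = 3/p`, `p ≥ 2`, `gcd(p,3) = 1`, and a weight `μ ∈ E_p` of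
`sl(3)` lying on a shifted hyperplane `H_α^{(p)}` (`⟨μ+ρ̄, α⟩ = p` for a positive root
`α ∈ {θ, α_1, α_2}`), one has `R(μ) = −ε e^{-2πiε/3} |R(μ)|` with `ε = +1` for `α = θ`
and `ε = −1` for `α = α_1, α_2`; consequently `R(μ) + R̄(μ) − ε |R(μ)| = 0`. -/
theorem statement15 (p : ℕ) (hp : 2 ≤ p) (hcop : Nat.Coprime p 3)
    (a1 a2 : ℤ) (h1 : 1 ≤ a1) (h1' : a1 ≤ (p : ℤ)) (h2 : 1 ≤ a2) (h2' : a2 ≤ (p : ℤ))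
    (ε : ℤ)
    (hcase : (a1 + a2 = (p : ℤ) ∧ ε = 1) ∨ (a1 = (p : ℤ) ∧ ε = -1) ∨
      (a2 = (p : ℤ) ∧ ε = -1)) :
    Rval p a1 a2 =
        -(ε : ℂ) * Complex.exp (-(2 * (π : ℂ) * I * (ε : ℂ)) / 3) *
          (‖Rval p a1 a2‖ : ℂ) ∧
      Rval p a1 a2 + (starRingEnd ℂ) (Rval p a1 a2) -
          (ε : ℂ) * (‖Rval p a1 a2‖ : ℂ) = 0 :=
  statement15_general p a1 a2 h1 h1' h2 h2' ε hcase
end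

section
/- For the integrable ŝl(3) characters at shifted level h = 3p: if λ ∈ P_+^{3p-3} has triality zero and λ ∉ Im(ι) (equivalently λ + ρ̄ ∈ 3P), then χ̄_λ^{(3p)}(μ) = 0 for every μ ∈ P_+^{3p-3} lying on a hyperplane H_α^{(lp)} = {μ : ⟨μ+ρ̄,α⟩ = lp}, α a positive root, l ∈ Z. -/
open Complex Real
open scoped BigOperators

/-- for the integrable `ŝl(3)` characters at shifted level `h = 3p`:
if `λ ∈ P_+^{3p-3}` has triality zero and `λ ∉ Im(ι)` (equivalently `λ + ρ̄ ∈ 3P`),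
then `χ̄_λ^{(3p)}(μ) = 0` for every `μ ∈ P_+^{3p-3}` lying on a hyperplane
`H_α^{(lp)} = {μ : ⟨μ+ρ̄,α⟩ = lp}`, `α` a positive root, `l ∈ ℤ`.
Here `a, u : Fin 3 → ℤ` are representatives of `λ+ρ̄` and `μ+ρ̄` (with `a` of
coordinate sum zero), the pairing `⟨w(λ+ρ̄), μ+ρ̄⟩` being `Σ_i a(w⁻¹ i) u i`, and the
vanishing of the character is expressed by the vanishing of the Kac–Peterson
numerator `Σ_{w∈W̄} det(w) e^{-2πi⟨w(λ+ρ̄),μ+ρ̄⟩/(3p)}`. -/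
theorem statement16 (p : ℕ) (hp : 2 ≤ p) (hcop : Nat.Coprime p 3)
    (a u : Fin 3 → ℤ)
    (ha0 : ∑ i, a i = 0)
    (hareg : ∀ i j : Fin 3, i < j → 1 ≤ a i - a j)
    (halc : a 0 - a 2 ≤ 3 * (p : ℤ) - 1)
    (h3 : ∃ (b : Fin 3 → ℤ) (c : ℤ), ∀ i, a i = 3 * b i + c)
    (hureg : ∀ i j : Fin 3, i < j → 1 ≤ u i - u j)
    (hualc : u 0 - u 2 ≤ 3 * (p : ℤ) - 1)
    (hwall : ∃ (i j : Fin 3) (l : ℤ), i < j ∧ u i - u j = l * (p : ℤ)) :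
    ∑ σ : Equiv.Perm (Fin 3),
        ((Equiv.Perm.sign σ : ℤˣ) : ℂ) *
          Complex.exp (-(2 * (π : ℂ) * I * ((∑ i, a (σ⁻¹ i) * u i : ℤ) : ℂ)) /
            (3 * (p : ℂ))) = 0 := by
  obtain ⟨b, c, hb⟩ := h3
  obtain ⟨i, j, l, hij, hul⟩ := hwall
  have hp0 : (p : ℂ) ≠ 0 := Nat.cast_ne_zero.mpr (by omega)
  have hijne : i ≠ j := ne_of_lt hij
  set f : Equiv.Perm (Fin 3) → ℂ := fun σ =>
    ((Equiv.Perm.sign σ : ℤˣ) : ℂ) *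
      Complex.exp (-(2 * (π : ℂ) * I * ((∑ i, a (σ⁻¹ i) * u i : ℤ) : ℂ)) /
        (3 * (p : ℂ))) with hf
  -- the sum over k of a(σ⁻¹ (swap i j k)) * u k
  have hswapsum : ∀ σ : Equiv.Perm (Fin 3),
      (∑ k, a (((Equiv.swap i j) * σ)⁻¹ k) * u k)
        = (∑ k, a (σ⁻¹ k) * u k) + (a (σ⁻¹ i) - a (σ⁻¹ j)) * (u j - u i) := by
    intro σ
    have h1 : ∀ k, ((Equiv.swap i j) * σ)⁻¹ k = σ⁻¹ ((Equiv.swap i j) k) := by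
      intro k
      simp [mul_inv_rev, Equiv.swap_inv, Equiv.Perm.mul_apply]
    simp_rw [h1]
    fin_cases i <;> fin_cases j <;>
      first
      | exact absurd hij (by decide)
      | (simp [Fin.sum_univ_three, Equiv.swap_apply_def]; ring)
  have hstep : ∀ σ : Equiv.Perm (Fin 3), f ((Equiv.swap i j) * σ) = - f σ := by
    intro σ
    have hdiff : a (σ⁻¹ i) - a (σ⁻¹ j) = 3 * (b (σ⁻¹ i) - b (σ⁻¹ j)) := by
      rw [hb, hb]; ring
    set m : ℤ := -((b (σ⁻¹ i) - b (σ⁻¹ j)) * l) with hm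
    have hN : (∑ k, a (((Equiv.swap i j) * σ)⁻¹ k) * u k)
        = (∑ k, a (σ⁻¹ k) * u k) + 3 * (p : ℤ) * m := by
      rw [hswapsum σ, hdiff]
      have : u j - u i = -(l * (p : ℤ)) := by omega
      rw [this, hm]; ring
    have hexp : Complex.exp (-(2 * (π : ℂ) * I *
          ((∑ k, a (((Equiv.swap i j) * σ)⁻¹ k) * u k : ℤ) : ℂ)) / (3 * (p : ℂ)))
        = Complex.exp (-(2 * (π : ℂ) * I *
          ((∑ k, a (σ⁻¹ k) * u k : ℤ) : ℂ)) / (3 * (p : ℂ))) := by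
      rw [hN]
      have h1 : (-(2 * (π : ℂ) * I *
            (((∑ k, a (σ⁻¹ k) * u k) + 3 * (p : ℤ) * m : ℤ) : ℂ)) / (3 * (p : ℂ)))
          = (-(2 * (π : ℂ) * I * ((∑ k, a (σ⁻¹ k) * u k : ℤ) : ℂ)) / (3 * (p : ℂ)))
            + ((-m : ℤ) : ℂ) * (2 * (π : ℂ) * I) := by
        push_cast
        field_simp
        ring
      rw [h1, Complex.exp_add, Complex.exp_int_mul_two_pi_mul_I, mul_one]
    have hsign : ((Equiv.Perm.sign ((Equiv.swap i j) * σ) : ℤˣ) : ℂ)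
        = -((Equiv.Perm.sign σ : ℤˣ) : ℂ) := by
      rw [Equiv.Perm.sign_mul, Equiv.Perm.sign_swap hijne]
      push_cast
      ring
    simp only [hf]
    rw [hsign, hexp]
    ring
  have hre : ∑ σ : Equiv.Perm (Fin 3), f ((Equiv.swap i j) * σ)
      = ∑ σ : Equiv.Perm (Fin 3), f σ := by
    exact Fintype.sum_equiv (Equiv.mulLeft (Equiv.swap i j)) _ _ (fun σ => rfl)
  have hS : (∑ σ : Equiv.Perm (Fin 3), f σ) = -(∑ σ : Equiv.Perm (Fin 3), f σ) := by
    conv_lhs => rw [← hre]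
    rw [← Finset.sum_neg_distrib]
    exact Finset.sum_congr rfl (fun σ _ => hstep σ)
  have : (∑ σ : Equiv.Perm (Fin 3), f σ) = 0 := by
    have := hS
    linear_combination (1/2 : ℂ) * this
  exact this
end

section
/- If {χ(μ)}_{μ∈E} is a family of |E| = |C| common eigenvector functionals of a commutative family of |C|×|C| matrices {N_y}_{y∈C} with nonnegative integer entries, N_1 = Id, satisfying N_x N_y = Σ_z N^z_{x,y} N_z with χ_x(μ)χ_y(μ) = Σ_z N^z_{x,y} χ_z(μ), χ_1(μ)=1, and the vectors χ(μ) are pairwise distinct, then the vectors are pairwise orthogonal with respect to the hermitian form using conjugation N^1_{x,y} = δ_{x,y*}, and the normalized matrix ψ_y^{(μ)} = χ_y(μ)(Σ_u |χ_u(μ)|²)^{-1/2} is unitary, giving N^z_{x,y} = Σ_μ ψ_x^{(μ)} ψ_y^{(μ)} ψ_z^{(μ)*} / ψ_1^{(μ)}. -/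
/-!
Since `conj χ_x = χ_{x*}` and `N^z_{x,y} = N^{y*}_{x,z*}`, multiplication by `χ_{x₀}` is
self-adjoint for the form `⟨χ(μ), χ(μ')⟩ = ∑ₓ χₓ(μ) conj χₓ(μ')`, so
`(χ_{x₀}(μ) - χ_{x₀}(μ')) ⟨χ(μ), χ(μ')⟩ = 0` and distinct characters are orthogonal.
Normalizing them gives a square matrix `ψ` with orthonormal rows, hence with orthonormal
columns, and pairing `ψₓ ψ_y / ψ₁ = ∑_w N^w_{x,y} ψ_w` with the columns recovers `N^z_{x,y}`.
-/

open ComplexConjugate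
open scoped Matrix

theorem Matrix.sum_mul_star_col_eq_ite {m n R : Type*} [Fintype m] [Fintype n]
    [DecidableEq m] [DecidableEq n] [CommRing R] [StarRing R] (A : Matrix m n R)
    (hcard : Fintype.card m = Fintype.card n)
    (hrows : ∀ i j, ∑ k, A i k * star (A j k) = if i = j then 1 else 0) (k l : n) :
    ∑ i, A i k * star (A i l) = if k = l then 1 else 0 := by
  have hAAh : A * Aᴴ = 1 := by
    ext i j
    simpa [mul_apply, one_apply] using hrows i j
  have hAhA := congr_fun₂ ((mul_eq_one_comm_of_card_eq m n R hcard).mp hAAh) l k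
  simp only [mul_apply, conjTranspose_apply, one_apply] at hAhA
  simp_rw [mul_comm (A _ k), hAhA, eq_comm]

section L2Normalize

variable {ι : Type*} [Fintype ι]

noncomputable def l2Normalize (f : ι → ℂ) : ι → ℂ :=
  fun x => f x * (Real.sqrt (∑ u, ‖f u‖ ^ 2) : ℂ)⁻¹

theorem sum_mul_conj_self (f : ι → ℂ) : ∑ x, f x * conj (f x) = ((∑ u, ‖f u‖ ^ 2 : ℝ) : ℂ) := by
  simp only [Complex.ofReal_sum, Complex.mul_conj, Complex.sq_norm]

theorem sum_l2Normalize_mul_conj (f g : ι → ℂ) :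
    ∑ x, l2Normalize f x * conj (l2Normalize g x) =
      (∑ x, f x * conj (g x)) *
        ((Real.sqrt (∑ u, ‖f u‖ ^ 2) : ℂ)⁻¹ * (Real.sqrt (∑ u, ‖g u‖ ^ 2) : ℂ)⁻¹) := by
  rw [Finset.sum_mul]
  refine Finset.sum_congr rfl fun x _ => ?_
  simp only [l2Normalize, map_mul, map_inv₀, Complex.conj_ofReal]
  ring

theorem sum_sq_norm_pos {f : ι → ℂ} (hf : f ≠ 0) : 0 < ∑ u, ‖f u‖ ^ 2 := by
  obtain ⟨x, hx⟩ := Function.ne_iff.mp hf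
  exact (by positivity : 0 < ‖f x‖ ^ 2).trans_le
    (Finset.single_le_sum (fun u _ => sq_nonneg ‖f u‖) (Finset.mem_univ x))

theorem sum_l2Normalize_mul_conj_self {f : ι → ℂ} (hf : f ≠ 0) :
    ∑ x, l2Normalize f x * conj (l2Normalize f x) = 1 := by
  have hpos := sum_sq_norm_pos hf
  rw [sum_l2Normalize_mul_conj, sum_mul_conj_self, ← mul_inv, ← Complex.ofReal_mul,
    Real.mul_self_sqrt hpos.le]
  exact mul_inv_cancel₀ (by exact_mod_cast hpos.ne')

end L2Normalize

section Characters

variable {C E : Type*} [Fintype C] (Nc : C → C → C → ℕ) (star : C → C) (χ : C → E → ℂ)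

theorem sum_Nc_mul_conj (hinvol : Function.Involutive star)
    (heig : ∀ x y μ, χ x μ * χ y μ = ∑ z, (Nc x y z : ℂ) * χ z μ)
    (hsym : ∀ x y z, Nc x y z = Nc x (star z) (star y))
    (hconj : ∀ x μ, χ (star x) μ = conj (χ x μ)) (x₀ z : C) (μ : E) :
    ∑ x, (Nc x₀ x z : ℂ) * conj (χ x μ) = χ x₀ μ * conj (χ z μ) := calc
  ∑ x, (Nc x₀ x z : ℂ) * conj (χ x μ)
      = ∑ x, (Nc x₀ (star z) (star x) : ℂ) * χ (star x) μ := by simp only [hsym x₀ _ z, hconj]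
  _ = ∑ w, (Nc x₀ (star z) w : ℂ) * χ w μ :=
      Equiv.sum_comp (hinvol.toPerm star) fun w => (Nc x₀ (star z) w : ℂ) * χ w μ
  _ = χ x₀ μ * conj (χ z μ) := by rw [← heig, hconj]

theorem mul_sum_mul_conj_eq (hinvol : Function.Involutive star)
    (heig : ∀ x y μ, χ x μ * χ y μ = ∑ z, (Nc x y z : ℂ) * χ z μ)
    (hsym : ∀ x y z, Nc x y z = Nc x (star z) (star y))
    (hconj : ∀ x μ, χ (star x) μ = conj (χ x μ)) (x₀ : C) (μ μ' : E) :
    χ x₀ μ * ∑ x, χ x μ * conj (χ x μ') = χ x₀ μ' * ∑ x, χ x μ * conj (χ x μ') := calc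
  χ x₀ μ * ∑ x, χ x μ * conj (χ x μ')
      = ∑ x, ∑ z, (Nc x₀ x z : ℂ) * conj (χ x μ') * χ z μ := by
        simp only [Finset.mul_sum, ← mul_assoc, heig, Finset.sum_mul]
        exact Finset.sum_congr rfl fun x _ => Finset.sum_congr rfl fun z _ => mul_right_comm _ _ _
  _ = ∑ z, (∑ x, (Nc x₀ x z : ℂ) * conj (χ x μ')) * χ z μ := by
        rw [Finset.sum_comm]; simp only [Finset.sum_mul]
  _ = χ x₀ μ' * ∑ x, χ x μ * conj (χ x μ') := by
        simp only [sum_Nc_mul_conj Nc star χ hinvol heig hsym hconj, Finset.mul_sum]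
        exact Finset.sum_congr rfl fun z _ => by ring

theorem sum_mul_conj_eq_zero_of_ne (hinvol : Function.Involutive star)
    (heig : ∀ x y μ, χ x μ * χ y μ = ∑ z, (Nc x y z : ℂ) * χ z μ)
    (hsym : ∀ x y z, Nc x y z = Nc x (star z) (star y))
    (hconj : ∀ x μ, χ (star x) μ = conj (χ x μ)) {μ μ' : E} (hne : (χ · μ) ≠ (χ · μ')) :
    ∑ x, χ x μ * conj (χ x μ') = 0 := by
  obtain ⟨x₀, hx₀⟩ := Function.ne_iff.mp hne
  have h := mul_sum_mul_conj_eq Nc star χ hinvol heig hsym hconj x₀ μ μ'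
  have h' : (χ x₀ μ - χ x₀ μ') * ∑ x, χ x μ * conj (χ x μ') = 0 := by linear_combination h
  exact (mul_eq_zero.mp h').resolve_left (sub_ne_zero.mpr hx₀)

end Characters

section Inversion

variable {C E : Type*} [Fintype C] (Nc : C → C → C → ℕ)

theorem mul_mul_div_eq_sum_Nc_mul (χ : C → E → ℂ) (one : C) (c : E → ℂ) (hc : ∀ μ, c μ ≠ 0)
    (hone : ∀ μ, χ one μ = 1) (heig : ∀ x y μ, χ x μ * χ y μ = ∑ z, (Nc x y z : ℂ) * χ z μ)
    (x y : C) (μ : E) :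
    χ x μ * c μ * (χ y μ * c μ) / (χ one μ * c μ) = ∑ w, (Nc x y w : ℂ) * (χ w μ * c μ) := by
  rw [hone, one_mul, mul_mul_mul_comm, mul_div_assoc, mul_div_cancel_right₀ _ (hc μ), heig,
    Finset.sum_mul]
  exact Finset.sum_congr rfl fun w _ => mul_assoc _ _ _

theorem Nc_eq_sum_mul_mul_conj_div [Fintype E] [DecidableEq C] {ψ : C → E → ℂ} (one : C)
    (hcols : ∀ x y, ∑ μ, ψ x μ * conj (ψ y μ) = if x = y then 1 else 0)
    (hprod : ∀ x y μ, ψ x μ * ψ y μ / ψ one μ = ∑ w, (Nc x y w : ℂ) * ψ w μ) (x y z : C) :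
    (Nc x y z : ℂ) = ∑ μ, ψ x μ * ψ y μ * conj (ψ z μ) / ψ one μ := calc
  (Nc x y z : ℂ) = ∑ w, (Nc x y w : ℂ) * ∑ μ, ψ w μ * conj (ψ z μ) := by simp [hcols]
  _ = ∑ μ, (∑ w, (Nc x y w : ℂ) * ψ w μ) * conj (ψ z μ) := by
      simp only [Finset.mul_sum, Finset.sum_mul, mul_assoc]
      exact Finset.sum_comm
  _ = ∑ μ, ψ x μ * ψ y μ * conj (ψ z μ) / ψ one μ := by simp only [← hprod, div_mul_eq_mul_div]

end Inversion

theorem statement19_general {C E : Type*} [Fintype C] [Fintype E] [DecidableEq C] [DecidableEq E]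
    (hcard : Fintype.card E = Fintype.card C)
    (Nc : C → C → C → ℕ) (one : C) (star : C → C) (χ : C → E → ℂ)
    (hinvol : ∀ x, star (star x) = x)
    (hone : ∀ μ, χ one μ = 1)
    (heig : ∀ x y μ, χ x μ * χ y μ = ∑ z, (Nc x y z : ℂ) * χ z μ)
    (hsym : ∀ x y z, Nc x y z = Nc x (star z) (star y))
    (hconj : ∀ x μ, χ (star x) μ = (starRingEnd ℂ) (χ x μ))
    (hdist : ∀ μ μ' : E, (∀ x, χ x μ = χ x μ') → μ = μ') :
    let ψ : C → E → ℂ := fun y μ =>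
      χ y μ * ((Real.sqrt (∑ u, ‖χ u μ‖ ^ 2) : ℂ))⁻¹
    (∀ μ μ' : E, μ ≠ μ' → ∑ x, χ x μ * (starRingEnd ℂ) (χ x μ') = 0) ∧
    (∀ μ μ' : E, ∑ x, ψ x μ * (starRingEnd ℂ) (ψ x μ') = if μ = μ' then 1 else 0) ∧
    (∀ x y : C, ∑ μ, ψ x μ * (starRingEnd ℂ) (ψ y μ) = if x = y then 1 else 0) ∧
    (∀ x y z : C, (Nc x y z : ℂ) =
      ∑ μ, ψ x μ * ψ y μ * (starRingEnd ℂ) (ψ z μ) / ψ one μ) := by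
  intro ψ
  have hχ_ne : ∀ μ, (χ · μ) ≠ 0 := fun μ h => one_ne_zero ((hone μ).symm.trans (congr_fun h one))
  have horth : ∀ μ μ', μ ≠ μ' → ∑ x, χ x μ * conj (χ x μ') = 0 := fun μ μ' hne =>
    sum_mul_conj_eq_zero_of_ne Nc star χ hinvol heig hsym hconj fun h =>
      hne (hdist μ μ' (congr_fun h))
  have hrows : ∀ μ μ', ∑ x, ψ x μ * conj (ψ x μ') = if μ = μ' then 1 else 0 := by
    intro μ μ'
    split_ifs with h
    · subst h
      exact sum_l2Normalize_mul_conj_self (hχ_ne μ)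
    · exact (sum_l2Normalize_mul_conj _ _).trans (by rw [horth μ μ' h, zero_mul])
  have hcols : ∀ x y, ∑ μ, ψ x μ * conj (ψ y μ) = if x = y then 1 else 0 :=
    Matrix.sum_mul_star_col_eq_ite (fun μ x => ψ x μ) hcard hrows
  refine ⟨horth, hrows, hcols, Nc_eq_sum_mul_mul_conj_div Nc one hcols fun x y μ => ?_⟩
  have hc : ∀ μ, ((Real.sqrt (∑ u, ‖χ u μ‖ ^ 2) : ℂ))⁻¹ ≠ 0 := fun μ =>
    inv_ne_zero (Complex.ofReal_ne_zero.mpr (Real.sqrt_pos.mpr (sum_sq_norm_pos (hχ_ne μ))).ne')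
  exact mul_mul_div_eq_sum_Nc_mul Nc χ one _ hc hone heig x y μ

/-- diagonalization of a fusion (C-)algebra.  Given a commutative
family of `|C|×|C|` matrices with nonnegative integer structure constants
`N^z_{x,y}`, identity `N_1 = Id`, involution `*` with `N^1_{x,y} = δ_{x,y*}` and
`N^z_{x,y} = N^{y*}_{x,z*}`, `χ_{x*} = χ̄_x`, and a family `{χ(μ)}_{μ∈E}`,
`|E| = |C|`, of pairwise distinct common eigenvector functionals
(`χ_x(μ)χ_y(μ) = Σ_z N^z_{x,y} χ_z(μ)`, `χ_1(μ) = 1`): then the vectors `χ(μ)` are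
pairwise orthogonal for the hermitian form, the normalized matrix
`ψ_y^{(μ)} = χ_y(μ)(Σ_u |χ_u(μ)|²)^{-1/2}` is unitary, and the Verlinde-type
inversion `N^z_{x,y} = Σ_μ ψ_x^{(μ)} ψ_y^{(μ)} ψ_z^{(μ)*}/ψ_1^{(μ)}` holds. -/
theorem statement19 {C E : Type*} [Fintype C] [Fintype E] [DecidableEq C] [DecidableEq E]
    (hcard : Fintype.card E = Fintype.card C)
    (Nc : C → C → C → ℕ) (one : C) (star : C → C) (χ : C → E → ℂ)
    (hinvol : ∀ x, star (star x) = x)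
    (hone : ∀ μ, χ one μ = 1)
    (hNone : ∀ x z, Nc one x z = if x = z then 1 else 0)
    (hNcomm : ∀ x y z, Nc x y z = Nc y x z)
    (heig : ∀ x y μ, χ x μ * χ y μ = ∑ z, (Nc x y z : ℂ) * χ z μ)
    (hdual : ∀ x y, Nc x y one = if y = star x then 1 else 0)
    (hsym : ∀ x y z, Nc x y z = Nc x (star z) (star y))
    (hconj : ∀ x μ, χ (star x) μ = (starRingEnd ℂ) (χ x μ))
    (hdist : ∀ μ μ' : E, (∀ x, χ x μ = χ x μ') → μ = μ') :
    let ψ : C → E → ℂ := fun y μ =>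
      χ y μ * ((Real.sqrt (∑ u, ‖χ u μ‖ ^ 2) : ℂ))⁻¹
    (∀ μ μ' : E, μ ≠ μ' → ∑ x, χ x μ * (starRingEnd ℂ) (χ x μ') = 0) ∧
    (∀ μ μ' : E, ∑ x, ψ x μ * (starRingEnd ℂ) (ψ x μ') = if μ = μ' then 1 else 0) ∧
    (∀ x y : C, ∑ μ, ψ x μ * (starRingEnd ℂ) (ψ y μ) = if x = y then 1 else 0) ∧
    (∀ x y z : C, (Nc x y z : ℂ) =
      ∑ μ, ψ x μ * ψ y μ * (starRingEnd ℂ) (ψ z μ) / ψ one μ) :=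
  statement19_general hcard Nc one star χ hinvol hone heig hsym hconj hdist
end
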